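/- The free extension functor from supported permutation sets to supported renaming sets, sending X to the quotient of ℝ × X by the least equivalence relation ∼ with (ρ,x) ∼ (ρ',x) when ρ and ρ' agree on supp(x), and (ρ∘π, x) ∼ (ρ, π·x), with action ρ·[(ρ',x)] = [(ρ∘ρ',x)], is a well-defined functor: in particular, for an equivariant F : X → Y, the map [(ρ,x)] ↦ [(ρ,F(x))] is well-defined. -/

import Mathlib

abbrev Atom := ℕ

def FinPermGroup : Subgroup (Equiv.Perm Atom) where
  carrier := {π | {a | π a ≠ a}.Finite}
  one_mem' := by simp
  mul_mem' := by
    intro π π' hπ hπ'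
    refine Set.Finite.subset (Set.Finite.union hπ hπ') fun a ha => ?_
    by_contra h
    simp only [Set.mem_union, Set.mem_setOf_eq, not_or, not_not] at h
    exact ha (show π (π' a) = a by rw [h.2, h.1])
  inv_mem' := by
    intro π hπ
    have h : {a | π⁻¹ a ≠ a} = {a | π a ≠ a} := by
      ext a
      simp only [Set.mem_setOf_eq, ne_eq, not_iff_not]
      rw [Equiv.Perm.inv_eq_iff_eq, eq_comm]
    show {a | π⁻¹ a ≠ a}.Finite
    rw [h]; exact hπ

abbrev FinPerm : Type := FinPermGroup

def PSupports {X : Type*} [MulAction FinPerm X] (A : Set Atom) (x : X) : Prop :=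
  ∀ π π' : FinPerm, (∀ a ∈ A, π.1 a = π'.1 a) → π • x = π' • x

def PIsLeastSupport {X : Type*} [MulAction FinPerm X] (S : Set Atom) (x : X) : Prop :=
  PSupports S x ∧ ∀ A, PSupports A x → S ⊆ A

def IsPermissionSet (S : Set Atom) : Prop :=
  ∃ A B : Finset Atom, (↑A : Set Atom) ⊆ {n | n % 2 = 1} ∧ (↑B : Set Atom) ⊆ {n | n % 2 = 0} ∧
    S = ({n : Atom | n % 2 = 0} ∪ ↑A) \ ↑B

def swapPerm (a b : Atom) : FinPerm :=
  ⟨Equiv.swap a b, by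
    show {c | Equiv.swap a b c ≠ c}.Finite
    apply Set.Finite.subset ((Set.finite_singleton b).insert a)
    intro c hc
    by_contra hn
    simp only [Set.mem_insert_iff, Set.mem_singleton_iff, not_or] at hn
    exact hc (Equiv.swap_apply_of_ne_of_ne hn.1 hn.2)⟩

instance : SMul FinPerm Atom := ⟨fun π a => π.1 a⟩
instance : MulAction FinPerm Atom where
  one_smul _ := rfl
  mul_smul _ _ _ := rfl

def RenMonoid : Submonoid (Function.End Atom) where
  carrier := {ρ | {a | ρ a ≠ a}.Finite}
  one_mem' := Set.Finite.subset Set.finite_empty (fun _ ha => (ha rfl).elim)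
  mul_mem' := by
    intro ρ ρ' hρ hρ'
    refine Set.Finite.subset (Set.Finite.union hρ hρ') fun a ha => ?_
    by_contra h
    simp only [Set.mem_union, Set.mem_setOf_eq, not_or, not_not] at h
    exact ha (show ρ (ρ' a) = a by rw [h.2, h.1])

abbrev Ren : Type := RenMonoid

def rdom (ρ : Ren) : Set Atom := {a | ρ.1 a ≠ a}
def rimg (ρ : Ren) : Set Atom := ρ.1 '' rdom ρ
def rnontriv (ρ : Ren) : Set Atom := rdom ρ ∪ rimg ρ

def RSupports {X : Type*} [MulAction Ren X] (A : Set Atom) (x : X) : Prop :=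
  ∀ ρ ρ' : Ren, (∀ a ∈ A, ρ.1 a = ρ'.1 a) → ρ • x = ρ' • x

def RIsLeastSupport {X : Type*} [MulAction Ren X] (S : Set Atom) (x : X) : Prop :=
  RSupports S x ∧ ∀ A, RSupports A x → S ⊆ A

def atomRen (a b : Atom) : Ren :=
  ⟨fun c => if c = a then b else c, by
    show {c | (if c = a then b else c) ≠ c}.Finite
    apply Set.Finite.subset (Set.finite_singleton a)
    intro c hc
    by_contra hn
    simp only [Set.mem_singleton_iff] at hn
    exact hc (by simp [if_neg hn])⟩

def FunSupportedBy {X Y : Type*} [MulAction Ren X] [MulAction Ren Y]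
    (S : Set Atom) (f : X → Y) : Prop :=
  ∀ (ρ : Ren) (x : X), rdom ρ ∩ S = ∅ → ρ • f x = f (ρ • x)

def FreshPair (ρ₁ ρ₂ : Ren) (A S : Set Atom) : Prop :=
  rdom ρ₁ = A ∧ rdom ρ₂ = rimg ρ₁ ∧ (∀ a ∈ A, ρ₂.1 (ρ₁.1 a) = a) ∧
    rdom ρ₂ ∩ (S ∪ A) = ∅

instance : SMul Ren Atom := ⟨fun ρ a => ρ.1 a⟩
instance : MulAction Ren Atom where
  one_smul _ := rfl
  mul_smul _ _ _ := rfl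

/-- Every finitely-supported permutation is in particular a renaming. -/
def permToRen (π : FinPerm) : Ren :=
  ⟨(π.1 : Atom → Atom), by
    show {a | π.1 a ≠ a}.Finite
    exact π.2⟩

/-- The generating relation for the free extension `Ren(X)` of a permutation set `X`
to a renaming set: the quotient of `Ren × X` by the least equivalence relation generated
by this relation is `Ren(X)`. -/
def FreeRel {X : Type*} [MulAction FinPerm X] (supp : X → Set Atom) :
    (Ren × X) → (Ren × X) → Prop :=
  fun p q =>
    (p.2 = q.2 ∧ ∀ a ∈ supp p.2, p.1.1 a = q.1.1 a) ∨
    (∃ (ρ : Ren) (π : FinPerm) (x : X), p = (ρ * permToRen π, x) ∧ q = (ρ, π • x))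

theorem Relation.EqvGen.lift {α β : Type*} {r : α → α → Prop} {s : β → β → Prop}
    {a b : α} (f : α → β) (h : ∀ a b, r a b → s (f a) (f b)) (hab : Relation.EqvGen r a b) :
    Relation.EqvGen s (f a) (f b) := by
  induction hab with
  | rel a b hab => exact .rel _ _ (h a b hab)
  | refl a => exact .refl _
  | symm a b _ ih => exact .symm _ _ ih
  | trans a b c _ _ ihab ihbc => exact .trans _ _ _ ihab ihbc

section Equivariant

variable {X Y : Type*} [MulAction FinPerm X] [MulAction FinPerm Y] {F : X → Y}

theorem PSupports.equivariant_apply (hF : ∀ (π : FinPerm) (x : X), F (π • x) = π • F x)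
    {A : Set Atom} {x : X} (hA : PSupports A x) : PSupports A (F x) := by
  intro π π' hππ'
  rw [← hF, ← hF, hA π π' hππ']

theorem PIsLeastSupport.subset_of_equivariant
    (hF : ∀ (π : FinPerm) (x : X), F (π • x) = π • F x) {S T : Set Atom} {x : X}
    (hT : PIsLeastSupport T (F x)) (hS : PSupports S x) : T ⊆ S :=
  hT.2 S (hS.equivariant_apply hF)

end Equivariant

namespace FreeRel

variable {X : Type*} [MulAction FinPerm X] {supp : X → Set Atom} {p q : Ren × X}

theorem mul_left (ρ : Ren) (h : FreeRel supp p q) :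
    FreeRel supp (ρ * p.1, p.2) (ρ * q.1, q.2) := by
  rcases h with ⟨hx, hagree⟩ | ⟨ρ', π, x, rfl, rfl⟩
  · exact .inl ⟨hx, fun a ha => congrArg ρ.1 (hagree a ha)⟩
  · exact .inr ⟨ρ * ρ', π, x, by rw [mul_assoc], rfl⟩

theorem map {Y : Type*} [MulAction FinPerm Y] {suppY : Y → Set Atom}
    (hX : ∀ x, PSupports (supp x) x) (hY : ∀ y, PIsLeastSupport (suppY y) y)
    {F : X → Y} (hF : ∀ (π : FinPerm) (x : X), F (π • x) = π • F x) (h : FreeRel supp p q) :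
    FreeRel suppY (p.1, F p.2) (q.1, F q.2) := by
  rcases h with ⟨hx, hagree⟩ | ⟨ρ, π, x, rfl, rfl⟩
  · exact .inl ⟨congrArg F hx, fun a ha =>
      hagree a ((hY (F p.2)).subset_of_equivariant hF (hX p.2) ha)⟩
  · exact .inr ⟨ρ, π, F x, rfl, by rw [hF]⟩

end FreeRel

theorem stmt14 {X Y : Type*} [MulAction FinPerm X] [MulAction FinPerm Y]
    (suppX : X → Set Atom) (suppY : Y → Set Atom)
    (hX : ∀ x, PIsLeastSupport (suppX x) x) (hY : ∀ y, PIsLeastSupport (suppY y) y)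
    (F : X → Y) (hF : ∀ (π : FinPerm) (x : X), F (π • x) = π • F x) :
    (∀ (ρ : Ren) (p q : Ren × X), Relation.EqvGen (FreeRel suppX) p q →
        Relation.EqvGen (FreeRel suppX) (ρ * p.1, p.2) (ρ * q.1, q.2)) ∧
    (∀ p q : Ren × X, Relation.EqvGen (FreeRel suppX) p q →
        Relation.EqvGen (FreeRel suppY) (p.1, F p.2) (q.1, F q.2)) :=
  ⟨fun ρ _ _ h => h.lift (fun p => (ρ * p.1, p.2)) fun _ _ => FreeRel.mul_left ρ,
    fun _ _ h => h.lift (fun p => (p.1, F p.2)) fun _ _ =>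
      FreeRel.map (fun x => (hX x).1) hY hF⟩
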